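/- Theorem (unconditional energy stability of the fully discrete SAV-MAC scheme): in the absence of the external force (f₁^{n+1/2}=f₂^{n+1/2}=0), if (U^{n+1}, P^{n+1/2}, Q^{n+1}) solves one step of the fully discrete SAV-MAC scheme, then for any Δt>0 the discrete energy law |Q^{n+1}|² − |Q^n|² = −ν Δt ‖DU^{n+1/2}‖² holds for all n ≥ 0. -/

import Mathlib

/-!
Testing the two momentum equations with `U^{n+1/2}` and summing by parts turns the viscous terms
into `-ν ‖DU^{n+1/2}‖²`: the boundary terms vanish under the homogeneous Dirichlet conditions, and
the half-cell weights `h_i`, `k_j` of `‖DU‖` are exactly the ones the boundary rows produce. The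
pressure term becomes `-(P, d_x U₁ + d_y U₂)`, which vanishes because `U^n` and `U^{n+1}` are both
discretely divergence-free. The SAV equation is built so that, multiplied by `2 Q^{n+1/2} Δt`, its
nonlinear contribution cancels that of the tested momentum equations exactly, so no property of the
nonlinear term is needed and `|Q^{n+1}|² - |Q^n|² = -ν Δt ‖DU^{n+1/2}‖²` remains.
-/

open Finset

noncomputable section

namespace SAVMAC

/-- A staggered-grid function, indexed by (possibly extended) integer indices.
For a `u1`-type function, `f i j` is the value at `(x_i, y_{j+1/2})` (with the
boundary conventions `y_{-1/2} = y_0`, `y_{N_y+1/2} = y_{N_y}` for `j = -1, N_y`).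
For a `u2`-type function, `f i j` is the value at `(x_{i+1/2}, y_j)` (with
`x_{-1/2} = x_0`, `x_{N_x+1/2} = x_{N_x}` for `i = -1, N_x`).
For a cell-centered function, `f i j` is the value at `(x_{i+1/2}, y_{j+1/2})`. -/
abbrev G := ℤ → ℤ → ℝ

/-- The mesh weight `k_j` (`= k` in the interior, `k/2` at the boundary). -/
def kw (Ny : ℕ) (k : ℝ) (j : ℤ) : ℝ := if j = 0 ∨ j = (Ny : ℤ) then k / 2 else k

/-- The mesh weight `h_i`. -/
def hw (Nx : ℕ) (h : ℝ) (i : ℤ) : ℝ := if i = 0 ∨ i = (Nx : ℤ) then h / 2 else h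

/-- The inner product `(f,g)_{l²,M}` of cell-centered functions. -/
def ipM (Nx Ny : ℕ) (h k : ℝ) (f g : G) : ℝ :=
  ∑ i ∈ Finset.range Nx, ∑ j ∈ Finset.range Ny, h * k * f (i : ℤ) (j : ℤ) * g (i : ℤ) (j : ℤ)

/-- The inner product `(f,g)_{l²,T,M}` of `u1`-type functions. -/
def ipTM (Nx Ny : ℕ) (h k : ℝ) (f g : G) : ℝ :=
  ∑ i ∈ Finset.Ico 1 Nx, ∑ j ∈ Finset.range Ny, h * k * f (i : ℤ) (j : ℤ) * g (i : ℤ) (j : ℤ)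

/-- The inner product `(f,g)_{l²,M,T}` of `u2`-type functions. -/
def ipMT (Nx Ny : ℕ) (h k : ℝ) (f g : G) : ℝ :=
  ∑ i ∈ Finset.range Nx, ∑ j ∈ Finset.Ico 1 Ny, h * k * f (i : ℤ) (j : ℤ) * g (i : ℤ) (j : ℤ)

/-- The inner product `(f,g)_{l²,T_y}` of functions living at the nodes `(x_i, y_j)`,
`1 ≤ i ≤ N_x-1`, `0 ≤ j ≤ N_y`. -/
def ipTy (Nx Ny : ℕ) (h k : ℝ) (f g : G) : ℝ :=
  ∑ i ∈ Finset.Ico 1 Nx, ∑ j ∈ Finset.range (Ny + 1), h * kw Ny k j * f (i : ℤ) (j : ℤ) * g (i : ℤ) (j : ℤ)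

/-- The inner product `(f,g)_{l²,T_x}` of functions living at the nodes `(x_i, y_j)`,
`0 ≤ i ≤ N_x`, `1 ≤ j ≤ N_y-1`. -/
def ipTx (Nx Ny : ℕ) (h k : ℝ) (f g : G) : ℝ :=
  ∑ i ∈ Finset.range (Nx + 1), ∑ j ∈ Finset.Ico 1 Ny, hw Nx h i * k * f (i : ℤ) (j : ℤ) * g (i : ℤ) (j : ℤ)

/-- `‖U‖²_{l²}` for a velocity pair. -/
def l2sq (Nx Ny : ℕ) (h k : ℝ) (v1 v2 : G) : ℝ :=
  ipTM Nx Ny h k v1 v1 + ipMT Nx Ny h k v2 v2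

/-- `(U,V)_{l²}` for velocity pairs. -/
def ipl2 (Nx Ny : ℕ) (h k : ℝ) (v1 v2 w1 w2 : G) : ℝ :=
  ipTM Nx Ny h k v1 w1 + ipMT Nx Ny h k v2 w2

/-- `d_x`: half-index difference in `x`, `[d_x f]_{i+1/2,m} = (f_{i+1,m}-f_{i,m})/h`. -/
def dX (h : ℝ) (f : G) : G := fun i j => (f (i + 1) j - f i j) / h

/-- `d_y`: half-index difference in `y`. -/
def dY (k : ℝ) (f : G) : G := fun i j => (f i (j + 1) - f i j) / k

/-- `D_x`: integer-index difference in `x`, `[D_x f]_{i,m} = (f_{i+1/2,m}-f_{i-1/2,m})/h_i`. -/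
def DX (Nx : ℕ) (h : ℝ) (f : G) : G := fun i j => (f i j - f (i - 1) j) / hw Nx h i

/-- `D_y`: integer-index difference in `y`. -/
def DY (Ny : ℕ) (k : ℝ) (f : G) : G := fun i j => (f i j - f i (j - 1)) / kw Ny k j

/-- `D_x(d_x f)` at a `u1`-node. -/
def DXdX (h : ℝ) (f : G) : G := fun i j => (f (i + 1) j - 2 * f i j + f (i - 1) j) / h ^ 2

/-- `d_y(D_y f)` at a `u1`-node (with the half-cell convention at the boundary). -/
def dYDY (Ny : ℕ) (k : ℝ) (f : G) : G := fun i j => (DY Ny k f i (j + 1) - DY Ny k f i j) / k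

/-- `D_y(d_y f)` at a `u2`-node. -/
def DYdY (k : ℝ) (f : G) : G := fun i j => (f i (j + 1) - 2 * f i j + f i (j - 1)) / k ^ 2

/-- `d_x(D_x f)` at a `u2`-node (with the half-cell convention at the boundary). -/
def dXDX (Nx : ℕ) (h : ℝ) (f : G) : G := fun i j => (DX Nx h f (i + 1) j - DX Nx h f i j) / h

/-- `‖DU‖²` for a velocity pair. -/
def Dsq (Nx Ny : ℕ) (h k : ℝ) (v1 v2 : G) : ℝ :=
  ipM Nx Ny h k (dX h v1) (dX h v1) + ipTy Nx Ny h k (DY Ny k v1) (DY Ny k v1)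
    + ipTx Nx Ny h k (DX Nx h v2) (DX Nx h v2) + ipM Nx Ny h k (dY k v2) (dY k v2)

/-- Homogeneous Dirichlet boundary conditions for a staggered velocity pair. -/
def BC (Nx Ny : ℕ) (v1 v2 : G) : Prop :=
  (∀ j : ℤ, v1 0 j = 0 ∧ v1 (Nx : ℤ) j = 0) ∧
  (∀ i : ℤ, v1 i (-1) = 0 ∧ v1 i (Ny : ℤ) = 0) ∧
  (∀ j : ℤ, v2 (-1) j = 0 ∧ v2 (Nx : ℤ) j = 0) ∧
  (∀ i : ℤ, v2 i 0 = 0 ∧ v2 i (Ny : ℤ) = 0)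

/-- Discrete incompressibility `d_x v1 + d_y v2 = 0` at all cell centers. -/
def DivFree (Nx Ny : ℕ) (h k : ℝ) (v1 v2 : G) : Prop :=
  ∀ i j : ℤ, 0 ≤ i → i < (Nx : ℤ) → 0 ≤ j → j < (Ny : ℤ) →
    dX h v1 i j + dY k v2 i j = 0

/-- The value of the bilinear interpolant `P_h f` of a `u1`-type function at the integer
node `(x_i, y_j)` (respecting the boundary half-cells). -/
def avgY (Ny : ℕ) (f : G) : G := fun i j =>
  if j = 0 then f i (-1) else if j = (Ny : ℤ) then f i (Ny : ℤ) else (f i (j - 1) + f i j) / 2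

/-- The value of the bilinear interpolant `P_h f` of a `u2`-type function at the integer
node `(x_i, y_j)` (respecting the boundary half-cells). -/
def avgX (Nx : ℕ) (f : G) : G := fun i j =>
  if i = 0 then f (-1) j else if i = (Nx : ℤ) then f (Nx : ℤ) j else (f (i - 1) j + f i j) / 2

/-- First component of the explicit nonlinear term
`Ũ₁ D_x(P_h Ũ₁) + P_h Ũ₂ d_y(P_h Ũ₁)` at the `u1`-node `(x_i, y_{j+1/2})`. -/
def N1 (Ny : ℕ) (h k : ℝ) (w1 w2 : G) : G := fun i j =>
  w1 i j * ((w1 (i + 1) j - w1 (i - 1) j) / (2 * h)) +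
    ((w2 (i - 1) j + w2 i j + w2 (i - 1) (j + 1) + w2 i (j + 1)) / 4) *
      ((avgY Ny w1 i (j + 1) - avgY Ny w1 i j) / k)

/-- Second component of the explicit nonlinear term
`P_h Ũ₁ d_x(P_h Ũ₂) + Ũ₂ D_y(P_h Ũ₂)` at the `u2`-node `(x_{i+1/2}, y_j)`. -/
def N2 (Nx : ℕ) (h k : ℝ) (w1 w2 : G) : G := fun i j =>
  ((w1 i (j - 1) + w1 (i + 1) (j - 1) + w1 i j + w1 (i + 1) j) / 4) *
      ((avgX Nx w2 (i + 1) j - avgX Nx w2 i j) / h) +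
    w2 i j * ((w2 i (j + 1) - w2 i (j - 1)) / (2 * k))

/-- `B^{n+1/2} = √(E_h(Ũ^{n+1/2}) + δ)`. -/
def Bh (Nx Ny : ℕ) (h k δ : ℝ) (w1 w2 : G) : ℝ :=
  Real.sqrt (l2sq Nx Ny h k w1 w2 / 2 + δ)

/-- One step of the fully discrete SAV-MAC scheme: given the extrapolated velocity
`Ũ^{n+1/2} = (w1,w2)`, the old velocity `U^n = (u1,u2)` and old SAV value `Qn`, the
data `f^{n+1/2} = (f1,f2)`, the new iterate `U^{n+1} = (v1,v2)`, `P^{n+1/2} = P`,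
`Q^{n+1} = Qn1` satisfies the momentum equations, the SAV update, discrete
incompressibility and the boundary conditions; moreover `Q^{n+1/2} ≠ 0`. -/
def SchemeStep (Nx Ny : ℕ) (h k Δt ν δ : ℝ) (f1 f2 w1 w2 u1 u2 v1 v2 P : G)
    (Qn Qn1 : ℝ) : Prop :=
  (Qn + Qn1) / 2 ≠ 0 ∧
  (∀ i j : ℤ, 1 ≤ i → i < (Nx : ℤ) → 0 ≤ j → j < (Ny : ℤ) →
    (v1 i j - u1 i j) / Δt
      + ((Qn + Qn1) / 2 / Bh Nx Ny h k δ w1 w2) * N1 Ny h k w1 w2 i j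
      - ν * DXdX h (fun a b => (u1 a b + v1 a b) / 2) i j
      - ν * dYDY Ny k (fun a b => (u1 a b + v1 a b) / 2) i j
      + DX Nx h P i j = f1 i j) ∧
  (∀ i j : ℤ, 0 ≤ i → i < (Nx : ℤ) → 1 ≤ j → j < (Ny : ℤ) →
    (v2 i j - u2 i j) / Δt
      + ((Qn + Qn1) / 2 / Bh Nx Ny h k δ w1 w2) * N2 Nx h k w1 w2 i j
      - ν * DYdY k (fun a b => (u2 a b + v2 a b) / 2) i j
      - ν * dXDX Nx h (fun a b => (u2 a b + v2 a b) / 2) i j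
      + DY Ny k P i j = f2 i j) ∧
  ((Qn1 - Qn) / Δt
      = (1 / (2 * Bh Nx Ny h k δ w1 w2)) *
          ipl2 Nx Ny h k (N1 Ny h k w1 w2) (N2 Nx h k w1 w2)
            (fun a b => (u1 a b + v1 a b) / 2) (fun a b => (u2 a b + v2 a b) / 2)
        + (1 / (2 * ((Qn + Qn1) / 2))) *
          ipl2 Nx Ny h k (fun a b => (v1 a b - u1 a b) / Δt) (fun a b => (v2 a b - u2 a b) / Δt)
            (fun a b => (u1 a b + v1 a b) / 2) (fun a b => (u2 a b + v2 a b) / 2)) ∧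
  DivFree Nx Ny h k v1 v2 ∧
  BC Nx Ny v1 v2

theorem sum_range_sub_mul_add_sum_range_sub_mul (g v : ℤ → ℝ) (m : ℕ) :
    ∑ j ∈ range m, (g (j + 1) - g j) * v j + ∑ j ∈ range (m + 1), (v j - v (j - 1)) * g j
      = g m * v m - g 0 * v (-1) := by
  induction m with
  | zero =>
    simp only [range_zero, sum_empty, zero_add, sum_range_one, Nat.cast_zero, zero_sub]
    ring
  | succ m ih =>
    rw [sum_range_succ, sum_range_succ _ (m + 1)]
    push_cast
    simp only [add_sub_cancel_right]
    linear_combination ih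

theorem sum_range_succ_eq_sum_Ico_one (f : ℕ → ℝ) {m : ℕ} (h0 : f 0 = 0) (hm : f m = 0) :
    ∑ j ∈ range (m + 1), f j = ∑ j ∈ Ico 1 m, f j := by
  rcases Nat.eq_zero_or_pos m with rfl | hpos
  · simp [h0]
  · rw [sum_range_succ, hm, add_zero, range_eq_Ico, sum_eq_sum_Ico_succ_bot hpos, h0, zero_add]

theorem sum_Ico_sub_mul_eq_neg_sum_sub_mul (p v : ℤ → ℝ) {m : ℕ} (h0 : v 0 = 0)
    (hm : v m = 0) :
    ∑ i ∈ Ico 1 m, (p i - p (i - 1)) * v i = -∑ i ∈ range m, (v (i + 1) - v i) * p i := by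
  have key := sum_range_sub_mul_add_sum_range_sub_mul v p m
  rw [h0, hm, zero_mul, zero_mul, sub_zero,
    sum_range_succ_eq_sum_Ico_one (fun i => (p i - p (i - 1)) * v i) (by simp [h0])
      (by simp [hm])] at key
  linear_combination key

theorem sum_Ico_second_diff_mul_eq_neg_sum_sq (V : ℤ → ℝ) {m : ℕ} (h0 : V 0 = 0)
    (hm : V m = 0) :
    ∑ i ∈ Ico 1 m, (V (i + 1) - 2 * V i + V (i - 1)) * V i
      = -∑ i ∈ range m, (V (i + 1) - V i) ^ 2 := by
  have key := sum_Ico_sub_mul_eq_neg_sum_sub_mul (fun i => V (i + 1) - V i) V h0 hm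
  simp only [sub_add_cancel, ← sq] at key
  rw [← key]
  exact sum_congr rfl fun i _ => by ring

theorem sum_range_sub_mul_eq_neg_sum_weight_mul_sq (V w : ℤ → ℝ) (hw : ∀ j, w j ≠ 0)
    {m : ℕ} (h0 : V (-1) = 0) (hm : V m = 0) :
    ∑ j ∈ range m, ((V (j + 1) - V j) / w (j + 1) - (V j - V (j - 1)) / w j) * V j
      = -∑ j ∈ range (m + 1), w j * ((V j - V (j - 1)) / w j) ^ 2 := by
  have key := sum_range_sub_mul_add_sum_range_sub_mul (fun j => (V j - V (j - 1)) / w j) V m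
  simp only [add_sub_cancel_right, h0, hm, mul_zero, sub_zero] at key
  rw [eq_neg_iff_add_eq_zero, ← key]
  congr 1
  refine sum_congr rfl fun j _ => ?_
  field_simp [hw j]

variable {Nx Ny : ℕ} {h k : ℝ}

theorem kw_ne_zero (hk : k ≠ 0) (j : ℤ) : kw Ny k j ≠ 0 := by
  unfold kw; split_ifs <;> simp [hk]

theorem hw_ne_zero (hh : h ≠ 0) (i : ℤ) : hw Nx h i ≠ 0 := by
  unfold hw; split_ifs <;> simp [hh]

theorem hw_eq_of_mem_Ico {i : ℕ} (hi : i ∈ Ico 1 Nx) : hw Nx h i = h := by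
  rw [mem_Ico] at hi; unfold hw; rw [if_neg (by omega)]

theorem kw_eq_of_mem_Ico {j : ℕ} (hj : j ∈ Ico 1 Ny) : kw Ny k j = k := by
  rw [mem_Ico] at hj; unfold kw; rw [if_neg (by omega)]

theorem ipTM_DXdX (hh : h ≠ 0) {V : G} (hV : ∀ j, V 0 j = 0 ∧ V Nx j = 0) :
    ipTM Nx Ny h k (DXdX h V) V = -ipM Nx Ny h k (dX h V) (dX h V) := by
  unfold ipTM ipM
  rw [sum_comm, sum_comm (s := range Nx), ← sum_neg_distrib]
  refine sum_congr rfl fun j _ => ?_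
  have key := sum_Ico_second_diff_mul_eq_neg_sum_sq (fun i => V i j) (hV j).1 (hV j).2
  calc _ = k / h * ∑ i ∈ Ico 1 Nx, (V (i + 1) j - 2 * V i j + V (i - 1) j) * V i j := by
        rw [mul_sum]; exact sum_congr rfl fun i _ => by unfold DXdX; field_simp
    _ = _ := by
        rw [key, mul_neg, mul_sum]
        exact congrArg _ (sum_congr rfl fun i _ => by unfold dX; field_simp)

theorem ipMT_DYdY (hk : k ≠ 0) {V : G} (hV : ∀ i, V i 0 = 0 ∧ V i Ny = 0) :
    ipMT Nx Ny h k (DYdY k V) V = -ipM Nx Ny h k (dY k V) (dY k V) := by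
  unfold ipMT ipM
  rw [← sum_neg_distrib]
  refine sum_congr rfl fun i _ => ?_
  have key := sum_Ico_second_diff_mul_eq_neg_sum_sq (V i) (hV i).1 (hV i).2
  calc _ = h / k * ∑ j ∈ Ico 1 Ny, (V i (j + 1) - 2 * V i j + V i (j - 1)) * V i j := by
        rw [mul_sum]; exact sum_congr rfl fun j _ => by unfold DYdY; field_simp
    _ = _ := by
        rw [key, mul_neg, mul_sum]
        exact congrArg _ (sum_congr rfl fun j _ => by unfold dY; field_simp)

theorem ipTM_dYDY (hk : k ≠ 0) {V : G} (hV : ∀ i, V i (-1) = 0 ∧ V i Ny = 0) :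
    ipTM Nx Ny h k (dYDY Ny k V) V = -ipTy Nx Ny h k (DY Ny k V) (DY Ny k V) := by
  unfold ipTM ipTy
  rw [← sum_neg_distrib]
  refine sum_congr rfl fun i _ => ?_
  have key := sum_range_sub_mul_eq_neg_sum_weight_mul_sq (V i) (kw Ny k) (kw_ne_zero hk)
    (hV i).1 (hV i).2
  calc _ = h * ∑ j ∈ range Ny, (DY Ny k V i (j + 1) - DY Ny k V i j) * V i j := by
        rw [mul_sum]; exact sum_congr rfl fun j _ => by unfold dYDY; field_simp
    _ = _ := by
        simp only [DY, add_sub_cancel_right]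
        rw [key, mul_neg, mul_sum]
        exact congrArg _ (sum_congr rfl fun j _ => by ring)

theorem ipMT_dXDX (hh : h ≠ 0) {V : G} (hV : ∀ j, V (-1) j = 0 ∧ V Nx j = 0) :
    ipMT Nx Ny h k (dXDX Nx h V) V = -ipTx Nx Ny h k (DX Nx h V) (DX Nx h V) := by
  unfold ipMT ipTx
  rw [sum_comm, sum_comm (s := range (Nx + 1)), ← sum_neg_distrib]
  refine sum_congr rfl fun j _ => ?_
  have key := sum_range_sub_mul_eq_neg_sum_weight_mul_sq (fun i => V i j) (hw Nx h)
    (hw_ne_zero hh) (hV j).1 (hV j).2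
  calc _ = k * ∑ i ∈ range Nx, (DX Nx h V (i + 1) j - DX Nx h V i j) * V i j := by
        rw [mul_sum]; exact sum_congr rfl fun i _ => by unfold dXDX; field_simp
    _ = _ := by
        simp only [DX, add_sub_cancel_right]
        rw [key, mul_neg, mul_sum]
        exact congrArg _ (sum_congr rfl fun i _ => by ring)

theorem ipTM_DX (hh : h ≠ 0) (p : G) {V : G} (hV : ∀ j, V 0 j = 0 ∧ V Nx j = 0) :
    ipTM Nx Ny h k (DX Nx h p) V = -ipM Nx Ny h k p (dX h V) := by
  unfold ipTM ipM
  rw [sum_comm, sum_comm (s := range Nx), ← sum_neg_distrib]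
  refine sum_congr rfl fun j _ => ?_
  have key :=
    sum_Ico_sub_mul_eq_neg_sum_sub_mul (fun i => p i j) (fun i => V i j) (hV j).1 (hV j).2
  calc _ = k * ∑ i ∈ Ico 1 Nx, (p i j - p (i - 1) j) * V i j := by
        rw [mul_sum]
        exact sum_congr rfl fun i hi => by unfold DX; rw [hw_eq_of_mem_Ico hi]; field_simp
    _ = _ := by
        rw [key, mul_neg, mul_sum]
        exact congrArg _ (sum_congr rfl fun i _ => by unfold dX; field_simp)

theorem ipMT_DY (hk : k ≠ 0) (p : G) {V : G} (hV : ∀ i, V i 0 = 0 ∧ V i Ny = 0) :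
    ipMT Nx Ny h k (DY Ny k p) V = -ipM Nx Ny h k p (dY k V) := by
  unfold ipMT ipM
  rw [← sum_neg_distrib]
  refine sum_congr rfl fun i _ => ?_
  have key := sum_Ico_sub_mul_eq_neg_sum_sub_mul (p i) (V i) (hV i).1 (hV i).2
  calc _ = h * ∑ j ∈ Ico 1 Ny, (p i j - p i (j - 1)) * V i j := by
        rw [mul_sum]
        exact sum_congr rfl fun j hj => by unfold DY; rw [kw_eq_of_mem_Ico hj]; field_simp
    _ = _ := by
        rw [key, mul_neg, mul_sum]
        exact congrArg _ (sum_congr rfl fun j _ => by unfold dY; field_simp)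

theorem BC.midpoint {u1 u2 v1 v2 : G} (hu : BC Nx Ny u1 u2) (hv : BC Nx Ny v1 v2) :
    BC Nx Ny (fun i j => (u1 i j + v1 i j) / 2) (fun i j => (u2 i j + v2 i j) / 2) := by
  obtain ⟨hu1, hu2, hu3, hu4⟩ := hu
  obtain ⟨hv1, hv2, hv3, hv4⟩ := hv
  exact ⟨fun j => by simp [hu1 j, hv1 j], fun i => by simp [hu2 i, hv2 i],
    fun j => by simp [hu3 j, hv3 j], fun i => by simp [hu4 i, hv4 i]⟩

theorem DivFree.midpoint {u1 u2 v1 v2 : G} (hu : DivFree Nx Ny h k u1 u2)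
    (hv : DivFree Nx Ny h k v1 v2) :
    DivFree Nx Ny h k (fun i j => (u1 i j + v1 i j) / 2) (fun i j => (u2 i j + v2 i j) / 2) := by
  intro i j h0i hiN h0j hjN
  have hu' := hu i j h0i hiN h0j hjN
  have hv' := hv i j h0i hiN h0j hjN
  unfold dX dY at *
  linear_combination (hu' + hv') / 2

theorem ipM_dX_add_ipM_dY_eq_zero {V1 V2 : G} (hV : DivFree Nx Ny h k V1 V2) (p : G) :
    ipM Nx Ny h k p (dX h V1) + ipM Nx Ny h k p (dY k V2) = 0 := by
  simp only [ipM, ← sum_add_distrib]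
  refine sum_eq_zero fun i hi => sum_eq_zero fun j hj => ?_
  rw [mem_range] at hi hj
  linear_combination h * k * p i j * hV i j (by omega) (by omega) (by omega) (by omega)

theorem ipTM_eq_of_momentum (hh : h ≠ 0) (hk : k ≠ 0) {a n V p : G} {c ν : ℝ}
    (hVx : ∀ j, V 0 j = 0 ∧ V Nx j = 0) (hVy : ∀ i, V i (-1) = 0 ∧ V i Ny = 0)
    (hm : ∀ i j : ℤ, 1 ≤ i → i < Nx → 0 ≤ j → j < Ny →
      a i j + c * n i j - ν * DXdX h V i j - ν * dYDY Ny k V i j + DX Nx h p i j = 0) :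
    ipTM Nx Ny h k a V = -c * ipTM Nx Ny h k n V
      - ν * (ipM Nx Ny h k (dX h V) (dX h V) + ipTy Nx Ny h k (DY Ny k V) (DY Ny k V))
      + ipM Nx Ny h k p (dX h V) := by
  have tested : ipTM Nx Ny h k a V + c * ipTM Nx Ny h k n V - ν * ipTM Nx Ny h k (DXdX h V) V
      - ν * ipTM Nx Ny h k (dYDY Ny k V) V + ipTM Nx Ny h k (DX Nx h p) V = 0 := by
    simp only [ipTM, mul_sum, ← sum_add_distrib, ← sum_sub_distrib]
    refine sum_eq_zero fun i hi => sum_eq_zero fun j hj => ?_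
    rw [mem_Ico] at hi
    rw [mem_range] at hj
    linear_combination h * k * V i j * hm i j (by omega) (by omega) (by omega) (by omega)
  rw [ipTM_DXdX hh hVx, ipTM_dYDY hk hVy, ipTM_DX hh p hVx] at tested
  linear_combination tested

theorem ipMT_eq_of_momentum (hh : h ≠ 0) (hk : k ≠ 0) {a n V p : G} {c ν : ℝ}
    (hVx : ∀ j, V (-1) j = 0 ∧ V Nx j = 0) (hVy : ∀ i, V i 0 = 0 ∧ V i Ny = 0)
    (hm : ∀ i j : ℤ, 0 ≤ i → i < Nx → 1 ≤ j → j < Ny →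
      a i j + c * n i j - ν * DYdY k V i j - ν * dXDX Nx h V i j + DY Ny k p i j = 0) :
    ipMT Nx Ny h k a V = -c * ipMT Nx Ny h k n V
      - ν * (ipTx Nx Ny h k (DX Nx h V) (DX Nx h V) + ipM Nx Ny h k (dY k V) (dY k V))
      + ipM Nx Ny h k p (dY k V) := by
  have tested : ipMT Nx Ny h k a V + c * ipMT Nx Ny h k n V - ν * ipMT Nx Ny h k (DYdY k V) V
      - ν * ipMT Nx Ny h k (dXDX Nx h V) V + ipMT Nx Ny h k (DY Ny k p) V = 0 := by
    simp only [ipMT, mul_sum, ← sum_add_distrib, ← sum_sub_distrib]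
    refine sum_eq_zero fun i hi => sum_eq_zero fun j hj => ?_
    rw [mem_range] at hi
    rw [mem_Ico] at hj
    linear_combination h * k * V i j * hm i j (by omega) (by omega) (by omega) (by omega)
  rw [ipMT_DYdY hk hVy, ipMT_dXDX hh hVx, ipMT_DY hk p hVy] at tested
  linear_combination tested

theorem ipl2_eq_of_momentum (hh : h ≠ 0) (hk : k ≠ 0) {a1 a2 n1 n2 V1 V2 p : G} {c ν : ℝ}
    (hbc : BC Nx Ny V1 V2) (hdiv : DivFree Nx Ny h k V1 V2)
    (hm1 : ∀ i j : ℤ, 1 ≤ i → i < Nx → 0 ≤ j → j < Ny →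
      a1 i j + c * n1 i j - ν * DXdX h V1 i j - ν * dYDY Ny k V1 i j + DX Nx h p i j = 0)
    (hm2 : ∀ i j : ℤ, 0 ≤ i → i < Nx → 1 ≤ j → j < Ny →
      a2 i j + c * n2 i j - ν * DYdY k V2 i j - ν * dXDX Nx h V2 i j + DY Ny k p i j = 0) :
    ipl2 Nx Ny h k a1 a2 V1 V2 = -c * ipl2 Nx Ny h k n1 n2 V1 V2 - ν * Dsq Nx Ny h k V1 V2 := by
  obtain ⟨hV1x, hV1y, hV2x, hV2y⟩ := hbc
  unfold ipl2 Dsq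
  rw [ipTM_eq_of_momentum hh hk hV1x hV1y hm1, ipMT_eq_of_momentum hh hk hV2x hV2y hm2]
  linear_combination ipM_dX_add_ipM_dY_eq_zero hdiv p

theorem sq_sub_sq_of_sav_update {Qn Qn1 Δt B X Y D ν : ℝ} (hQ : (Qn + Qn1) / 2 ≠ 0)
    (hΔt : Δt ≠ 0)
    (hsav : (Qn1 - Qn) / Δt = 1 / (2 * B) * X + 1 / (2 * ((Qn + Qn1) / 2)) * Y)
    (hY : Y = -((Qn + Qn1) / 2 / B) * X - ν * D) :
    Qn1 ^ 2 - Qn ^ 2 = -(ν * Δt * D) := by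
  have hQ' : Qn + Qn1 ≠ 0 := by simpa using hQ
  rw [hY] at hsav
  field_simp at hsav
  linear_combination hsav / 2

end SAVMAC

theorem SAVMAC.fully_discrete_energy_stability_general
    (Nx Ny : ℕ)
    (h k Δt ν δ : ℝ) (hh : 0 < h) (hk : 0 < k) (hΔt : 0 < Δt)
    (um1 um2 u1 u2 v1 v2 P : SAVMAC.G) (Qn Qn1 : ℝ)
    (hBCn : SAVMAC.BC Nx Ny u1 u2)
    (hdivn : SAVMAC.DivFree Nx Ny h k u1 u2)
    (hstep : SAVMAC.SchemeStep Nx Ny h k Δt ν δ (fun _ _ => 0) (fun _ _ => 0)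
      (fun i j => (3 * u1 i j - um1 i j) / 2) (fun i j => (3 * u2 i j - um2 i j) / 2)
      u1 u2 v1 v2 P Qn Qn1) :
    |Qn1| ^ 2 - |Qn| ^ 2 =
      -(ν * Δt * SAVMAC.Dsq Nx Ny h k
        (fun i j => (u1 i j + v1 i j) / 2) (fun i j => (u2 i j + v2 i j) / 2)) := by
  obtain ⟨hQ, hm1, hm2, hsav, hdiv, hbc⟩ := hstep
  rw [sq_abs, sq_abs]
  exact SAVMAC.sq_sub_sq_of_sav_update hQ hΔt.ne' hsav
    (SAVMAC.ipl2_eq_of_momentum hh.ne' hk.ne' (hBCn.midpoint hbc) (hdivn.midpoint hdiv) hm1 hm2)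

/-- **Unconditional energy stability of the fully discrete SAV-MAC scheme**
(Theorem `thm_discrete total energy`): in the absence of the external force
(`f₁^{n+1/2} = f₂^{n+1/2} = 0`), if `(U^{n+1}, P^{n+1/2}, Q^{n+1})` solves one step of the
fully discrete SAV-MAC scheme (with `Ũ^{n+1/2} = (3U^n - U^{n-1})/2`, and `U^n` satisfying
the boundary conditions and discrete incompressibility), then for any `Δt > 0`
`|Q^{n+1}|² - |Q^n|² = -ν Δt ‖DU^{n+1/2}‖²`. -/
theorem SAVMAC.fully_discrete_energy_stability
    (Nx Ny : ℕ) (hNx : 1 ≤ Nx) (hNy : 1 ≤ Ny)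
    (h k Δt ν δ : ℝ) (hh : 0 < h) (hk : 0 < k) (hΔt : 0 < Δt) (hν : 0 < ν) (hδ : 0 < δ)
    (um1 um2 u1 u2 v1 v2 P : SAVMAC.G) (Qn Qn1 : ℝ)
    (hBCprev : SAVMAC.BC Nx Ny um1 um2)
    (hBCn : SAVMAC.BC Nx Ny u1 u2)
    (hdivn : SAVMAC.DivFree Nx Ny h k u1 u2)
    (hstep : SAVMAC.SchemeStep Nx Ny h k Δt ν δ (fun _ _ => 0) (fun _ _ => 0)
      (fun i j => (3 * u1 i j - um1 i j) / 2) (fun i j => (3 * u2 i j - um2 i j) / 2)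
      u1 u2 v1 v2 P Qn Qn1) :
    |Qn1| ^ 2 - |Qn| ^ 2 =
      -(ν * Δt * SAVMAC.Dsq Nx Ny h k
        (fun i j => (u1 i j + v1 i j) / 2) (fun i j => (u2 i j + v2 i j) / 2)) :=
  SAVMAC.fully_discrete_energy_stability_general Nx Ny h k Δt ν δ hh hk hΔt um1 um2 u1 u2 v1 v2 P Qn
    Qn1 hBCn hdivn hstep
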